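/- arXiv:2511.16580 — 2 statements merged into one kernel-verified Lean document; each statement's English description precedes it below -/
import Mathlib

section
/- For every n ≥ 1 and every N ≥ n, the coefficient of X^n in the formal power series (1, 0) · (M_1 M_2 ⋯ M_N) · (1, 1)ᵀ equals b(n), the number of block-separated overpartitions of n. Moreover the coefficient of X^0 equals b(0) = 1. -/
/-!
Write `A = [[1, 1], [1, 0]]`, so that `M_j = 1 + S_j A`. All factors commute, hence
`M_1 ⋯ M_N = ∑_{T ⊆ {1,…,N}} (∏_{j ∈ T} S_j) A^{|T|}`, and `(1, 0) A^k (1, 1)ᵀ = F_{k+2}`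
(Fibonacci numbers). The coefficient of `X^n` in `∏_{j ∈ T} S_j` counts the partitions of `n`
whose set of part-sizes is exactly `T`, and for `n ≤ N` every partition of `n` has its part-sizes
in `{1,…,N}`. With a formal weight `y` per distinct part-size this is the identity
`∑_T y^{|T|} [X^n] ∏_{j ∈ T} S_j = ∑_λ y^{r(λ)}`, `r(λ)` the number of distinct part-sizes,
read off from the partition generating function; applying `y^k ↦ F_{k+2}` shows that the
coefficient is `∑_λ F_{r(λ)+2}`. Finally, a chain of `r` part-sizes has exactly `F_{r+2}`
separated subsets: split on whether the largest part-size is overlined.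
-/

open PowerSeries Matrix

/-- The separation condition: no two consecutive distinct part-sizes (i.e. two elements
of `S` with no part-size of `p` strictly between them) are both overlined. -/
def SepCond {n : ℕ} (p : Nat.Partition n) (S : Finset ℕ) : Prop :=
  ∀ d ∈ S, ∀ e ∈ S, d < e → ∃ c ∈ p.parts.toFinset, d < c ∧ c < e

instance {n : ℕ} (p : Nat.Partition n) : DecidablePred (SepCond p) := fun _ =>
  Finset.decidableDforallFinset

/-- `b n` is the number of block-separated overpartitions of `n`: pairs `(λ, S)` of a
partition `λ` of `n` and a set `S` of overlined distinct part-sizes of `λ` such that no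
two consecutive distinct part-sizes both lie in `S`. -/
def b (n : ℕ) : ℕ :=
  ∑ p : Nat.Partition n, (p.parts.toFinset.powerset.filter (fun S => SepCond p S)).card

/-- `Sgf j = ∑_{m ≥ 1} X^{j m}`, the generating function of a nonempty block of parts of
size `j`, as a formal power series over `ℤ`. -/
noncomputable def Sgf (j : ℕ) : PowerSeries ℤ :=
  PowerSeries.mk fun k => if k ≠ 0 ∧ j ∣ k then 1 else 0

/-- The transfer matrix `M_j = [[1 + S_j, S_j], [S_j, 1]]`. -/
noncomputable def Mgf (j : ℕ) : Matrix (Fin 2) (Fin 2) (PowerSeries ℤ) :=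
  Matrix.of ![![1 + Sgf j, Sgf j], ![Sgf j, 1]]

open Finset
open scoped PowerSeries.WithPiTopology

theorem List.prod_map_range_one_add_smul {K B : Type*} [CommSemiring K] [Semiring B]
    [Algebra K B] (s : ℕ → K) (a : B) (N : ℕ) :
    ((List.range N).map fun i => 1 + s i • a).prod
      = ∑ t ∈ (Finset.range N).powerset, (∏ i ∈ t, s i) • a ^ #t := by
  have hfac : (fun i => 1 + s i • a)
      = Polynomial.aeval a ∘ fun i => 1 + Polynomial.C (s i) * Polynomial.X := by
    ext i
    simp [Algebra.smul_def]
  have hrange : ((List.range N).map fun i => 1 + Polynomial.C (s i) * Polynomial.X).prod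
      = ∏ i ∈ Finset.range N, (1 + Polynomial.C (s i) * Polynomial.X) :=
    rfl
  rw [hfac, ← List.map_map, ← map_list_prod, hrange, prod_one_add, map_sum]
  refine sum_congr rfl fun t _ => ?_
  rw [prod_mul_distrib, prod_const, ← map_prod, map_mul, map_pow, Polynomial.aeval_C,
    Polynomial.aeval_X, Algebra.smul_def]

section FibMatrix

variable (R : Type*) [Semiring R]

def fibMatrix : Matrix (Fin 2) (Fin 2) R := !![1, 1; 1, 0]

theorem fibMatrix_pow_apply_zero (k : ℕ) :
    (fibMatrix R ^ k) 0 0 = Nat.fib (k + 1) ∧ (fibMatrix R ^ k) 0 1 = Nat.fib k := by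
  induction k with
  | zero => simp
  | succ k ih =>
    obtain ⟨h0, h1⟩ := ih
    simp only [pow_succ, Matrix.mul_apply, Fin.sum_univ_two, h0, h1]
    simp [fibMatrix]
    rw [Nat.fib_add_two, add_comm, Nat.cast_add]

theorem fibMatrix_pow_zero_zero_add_zero_one (k : ℕ) :
    (fibMatrix R ^ k) 0 0 + (fibMatrix R ^ k) 0 1 = Nat.fib (k + 2) := by
  rw [(fibMatrix_pow_apply_zero R k).1, (fibMatrix_pow_apply_zero R k).2, Nat.fib_add_two,
    add_comm, Nat.cast_add]

end FibMatrix

theorem Mgf_eq_one_add_smul_fibMatrix (j : ℕ) : Mgf j = 1 + Sgf j • fibMatrix (PowerSeries ℤ) := by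
  ext r c
  fin_cases r <;> fin_cases c <;> simp [Mgf, fibMatrix]

theorem coeff_transfer_eq_sum_fib_mul (n N : ℕ) :
    coeff n (vecMul ![1, 0] ((List.range N).map fun i => Mgf (i + 1)).prod ⬝ᵥ ![1, 1])
      = ∑ t ∈ (range N).powerset, (Nat.fib (#t + 2) : ℤ) * coeff n (∏ i ∈ t, Sgf (i + 1)) := by
  have hrow (M : Matrix (Fin 2) (Fin 2) (PowerSeries ℤ)) :
      vecMul ![1, 0] M ⬝ᵥ ![1, 1] = M 0 0 + M 0 1 := by
    simp [vecMul, dotProduct, Fin.sum_univ_two]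
  simp_rw [Mgf_eq_one_add_smul_fibMatrix, List.prod_map_range_one_add_smul, hrow,
    Matrix.sum_apply, ← sum_add_distrib, Matrix.smul_apply, smul_eq_mul, ← mul_add,
    fibMatrix_pow_zero_zero_add_zero_one, map_sum]
  refine sum_congr rfl fun t _ => ?_
  rw [mul_comm, ← map_natCast (C (R := ℤ)), coeff_C_mul]

theorem coeff_Sgf (j k : ℕ) : coeff k (Sgf j) = if k ≠ 0 ∧ j ∣ k then 1 else 0 :=
  coeff_mk _ _

theorem coeff_Sgf_of_lt {j k : ℕ} (h : k < j) : coeff k (Sgf j) = 0 := by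
  rw [coeff_Sgf, if_neg]
  rintro ⟨hk, hdvd⟩
  exact absurd (Nat.le_of_dvd (Nat.pos_of_ne_zero hk) hdvd) (not_le.2 h)

theorem one_add_tsum_smul_X_pow_eq_Sgf {R : Type*} [CommRing R] [TopologicalSpace R]
    [T2Space R] (y : R) (i : ℕ) :
    (1 : R⟦X⟧) + ∑' j, y • X ^ ((i + 1) * (j + 1))
      = 1 + C y * PowerSeries.map (Int.castRingHom R) (Sgf (i + 1)) := by
  congr 1
  ext k
  rw [(Nat.Partition.summable_genFun_term (fun _ _ => y) i).map_tsum _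
    (WithPiTopology.continuous_coeff R k), coeff_C_mul, coeff_map, coeff_Sgf]
  simp only [coeff_smul, coeff_X_pow, smul_eq_mul, mul_ite, mul_one, mul_zero]
  by_cases hk : k ≠ 0 ∧ (i + 1) ∣ k
  · obtain ⟨hk0, m, rfl⟩ := hk
    obtain ⟨m, rfl⟩ := Nat.exists_eq_add_one_of_ne_zero (right_ne_zero_of_mul hk0)
    rw [tsum_eq_single m fun j hj => if_neg ?_]
    · simp [hk0]
    · simpa using hj.symm
  · rw [if_neg hk, map_zero, mul_zero]
    refine (tsum_congr fun j => if_neg ?_).trans tsum_zero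
    rintro rfl
    exact hk ⟨by positivity, dvd_mul_right _ _⟩

theorem coeff_prod_range_eq_of_hasProd {R : Type*} [CommSemiring R] [TopologicalSpace R]
    [T2Space R] {g : ℕ → R⟦X⟧} {G : R⟦X⟧} (hG : HasProd g G) {n N : ℕ}
    (hstable : ∀ M ≥ N, coeff n (∏ i ∈ range (M + 1), g i) = coeff n (∏ i ∈ range M, g i)) :
    coeff n (∏ i ∈ range N, g i) = coeff n G := by
  have hlim : Filter.Tendsto (fun M => coeff n (∏ i ∈ range M, g i)) Filter.atTop
      (nhds (coeff n G)) :=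
    ((WithPiTopology.continuous_coeff R n).tendsto G).comp hG.tendsto_prod_nat
  have hconst : ∀ M ≥ N, coeff n (∏ i ∈ range M, g i) = coeff n (∏ i ∈ range N, g i) :=
    fun M hM => Nat.le_induction rfl (fun M hM ih => (hstable M hM).trans ih) M hM
  exact tendsto_nhds_unique (tendsto_const_nhds.congr'
    (Filter.eventually_atTop.2 ⟨N, fun M hM => (hconst M hM).symm⟩)) hlim

theorem sum_powerset_pow_card_mul_coeff_prod_Sgf {R : Type*} [CommRing R] (y : R) {n N : ℕ}
    (hnN : n ≤ N) :
    ∑ t ∈ (range N).powerset, y ^ #t * ((coeff n (∏ i ∈ t, Sgf (i + 1)) : ℤ) : R)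
      = ∑ p : n.Partition, y ^ #p.parts.toFinset := by
  -- Any Hausdorff topology on `R` lets us read coefficients off `Nat.Partition.hasProd_genFun`.
  let : TopologicalSpace R := ⊥
  have : DiscreteTopology R := ⟨rfl⟩
  set g : ℕ → R⟦X⟧ := fun i => 1 + C y * PowerSeries.map (Int.castRingHom R) (Sgf (i + 1))
  have hG : HasProd g (Nat.Partition.genFun fun _ _ => y) := by
    simpa only [one_add_tsum_smul_X_pow_eq_Sgf] using Nat.Partition.hasProd_genFun (fun _ _ => y)
  have hstable : ∀ M ≥ N, coeff n (∏ i ∈ range (M + 1), g i) = coeff n (∏ i ∈ range M, g i) := by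
    intro M hM
    rw [prod_range_succ, mul_add, mul_one, map_add, add_eq_left, coeff_mul]
    refine sum_eq_zero fun ⟨a, b⟩ hab => ?_
    rw [HasAntidiagonal.mem_antidiagonal] at hab
    rw [coeff_C_mul, coeff_map, coeff_Sgf_of_lt (by omega), map_zero, mul_zero, mul_zero]
  have hexpand : coeff n (∏ i ∈ range N, g i)
      = ∑ t ∈ (range N).powerset, y ^ #t * ((coeff n (∏ i ∈ t, Sgf (i + 1)) : ℤ) : R) := by
    simp only [g, prod_one_add, map_sum, prod_mul_distrib, prod_const, ← map_prod, ← map_pow,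
      coeff_C_mul, coeff_map, eq_intCast]
  rw [← hexpand, coeff_prod_range_eq_of_hasProd hG hstable, Nat.Partition.coeff_genFun]
  simp [Finsupp.prod, Multiset.toFinsupp_support]

theorem sum_powerset_fib_mul_coeff_prod_Sgf {n N : ℕ} (hnN : n ≤ N) :
    ∑ t ∈ (range N).powerset, (Nat.fib (#t + 2) : ℤ) * coeff n (∏ i ∈ t, Sgf (i + 1))
      = ∑ p : n.Partition, (Nat.fib (#p.parts.toFinset + 2) : ℤ) := by
  let ℓ : Polynomial ℤ →ₗ[ℤ] ℤ := Polynomial.lsum fun k => (Nat.fib (k + 2) : ℤ) • LinearMap.id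
  have hℓ (k : ℕ) (c : ℤ) :
      ℓ ((Polynomial.X : Polynomial ℤ) ^ k * (c : Polynomial ℤ)) = Nat.fib (k + 2) * c := by
    rw [← Polynomial.C_eq_intCast, Polynomial.X_pow_mul_C, Polynomial.C_mul_X_pow_eq_monomial]
    simp [ℓ]
  have hℓ_one (k : ℕ) : ℓ ((Polynomial.X : Polynomial ℤ) ^ k) = Nat.fib (k + 2) := by
    simpa using hℓ k 1
  have := congrArg ℓ (sum_powerset_pow_card_mul_coeff_prod_Sgf Polynomial.X hnN)
  simpa only [map_sum, hℓ, hℓ_one] using this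

section Separated

variable {α : Type*} [LinearOrder α]

def IsSeparated (D S : Finset α) : Prop :=
  ∀ d ∈ S, ∀ e ∈ S, d < e → ∃ c ∈ D, d < c ∧ c < e

instance (D : Finset α) : DecidablePred (IsSeparated D) := fun _ =>
  Finset.decidableDforallFinset

variable {a : α} {s S : Finset α}

theorem isSeparated_insert_iff (ha : ∀ x ∈ s, x < a) (hS : S ⊆ s) :
    IsSeparated (insert a s) S ↔ IsSeparated s S := by
  refine ⟨fun h d hd e he hde => ?_, fun h d hd e he hde => ?_⟩
  · obtain ⟨c, hc, hdc, hce⟩ := h d hd e he hde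
    exact ⟨c, mem_of_mem_insert_of_ne hc (hce.trans (ha e (hS he))).ne, hdc, hce⟩
  · obtain ⟨c, hc, hdc, hce⟩ := h d hd e he hde
    exact ⟨c, mem_insert_of_mem hc, hdc, hce⟩

theorem isSeparated_insert_insert_iff (ha : ∀ x ∈ s, x < a) (hS : S ⊆ s) :
    IsSeparated (insert a s) (insert a S) ↔ IsSeparated s S ∧ ∀ x ∈ S, ∃ c ∈ s, x < c := by
  refine ⟨fun h => ⟨?_, fun x hx => ?_⟩, fun ⟨h, htop⟩ => ?_⟩
  · exact (isSeparated_insert_iff ha hS).1 fun d hd e he => h d (mem_insert_of_mem hd) e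
      (mem_insert_of_mem he)
  · obtain ⟨c, hc, hxc, hca⟩ := h x (mem_insert_of_mem hx) a (mem_insert_self a S) (ha x (hS hx))
    exact ⟨c, mem_of_mem_insert_of_ne hc hca.ne, hxc⟩
  · intro d hd e he hde
    rcases mem_insert.1 hd with rfl | hd
    · rcases mem_insert.1 he with rfl | he
      · exact absurd hde (lt_irrefl _)
      · exact absurd (ha e (hS he)) hde.not_gt
    rcases mem_insert.1 he with he | he
    · rw [he]
      obtain ⟨c, hc, hdc⟩ := htop d hd
      exact ⟨c, mem_insert_of_mem hc, hdc, ha c hc⟩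
    · obtain ⟨c, hc, hdc, hce⟩ := h d hd e he hde
      exact ⟨c, mem_insert_of_mem hc, hdc, hce⟩

theorem card_filter_powerset_insert (p : Finset α → Prop) [DecidablePred p] (has : a ∉ s) :
    #{S ∈ (insert a s).powerset | p S}
      = #{S ∈ s.powerset | p S} + #{S ∈ s.powerset | p (insert a S)} := by
  simp only [card_filter, sum_powerset_insert has]

theorem card_isSeparated_eq_fib_and_card_bounded_eq_fib (D : Finset α) :
    #{S ∈ D.powerset | IsSeparated D S} = Nat.fib (#D + 2) ∧
      #{S ∈ D.powerset | IsSeparated D S ∧ ∀ x ∈ S, ∃ c ∈ D, x < c} = Nat.fib (#D + 1) := by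
  induction D using Finset.induction_on_max with
  | empty => simp [IsSeparated, filter_singleton]
  | insert a s ha ih =>
    have has : a ∉ s := fun h => lt_irrefl a (ha a h)
    obtain ⟨ih_all, ih_bounded⟩ := ih
    have h_all : ∀ S ∈ s.powerset, IsSeparated (insert a s) S ↔ IsSeparated s S :=
      fun S hS => isSeparated_insert_iff ha (mem_powerset.1 hS)
    have h_all_insert : ∀ S ∈ s.powerset, IsSeparated (insert a s) (insert a S) ↔
        IsSeparated s S ∧ ∀ x ∈ S, ∃ c ∈ s, x < c :=
      fun S hS => isSeparated_insert_insert_iff ha (mem_powerset.1 hS)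
    have h_bounded : ∀ S ∈ s.powerset, (IsSeparated (insert a s) S ∧
        ∀ x ∈ S, ∃ c ∈ insert a s, x < c) ↔ IsSeparated s S := fun S hS =>
      ⟨fun h => (h_all S hS).1 h.1, fun h => ⟨(h_all S hS).2 h,
        fun x hx => ⟨a, mem_insert_self a s, ha x (mem_powerset.1 hS hx)⟩⟩⟩
    have h_bounded_insert : ∀ S ∈ s.powerset, ¬ (IsSeparated (insert a s) (insert a S) ∧
        ∀ x ∈ insert a S, ∃ c ∈ insert a s, x < c) := fun S _ ⟨_, htop⟩ => by
      obtain ⟨c, hc, hac⟩ := htop a (mem_insert_self a S)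
      rcases mem_insert.1 hc with rfl | hc
      · exact lt_irrefl c hac
      · exact lt_asymm hac (ha c hc)
    rw [card_filter_powerset_insert _ has, card_filter_powerset_insert _ has,
      filter_congr h_all, filter_congr h_all_insert, filter_congr h_bounded,
      filter_false_of_mem h_bounded_insert, card_empty, card_insert_of_notMem has, ih_all,
      ih_bounded]
    exact ⟨(add_comm _ _).trans Nat.fib_add_two.symm, rfl⟩

end Separated

theorem b_eq_sum_fib (n : ℕ) : b n = ∑ p : n.Partition, Nat.fib (#p.parts.toFinset + 2) :=
  sum_congr rfl fun p _ => (card_isSeparated_eq_fib_and_card_bounded_eq_fib p.parts.toFinset).1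

theorem coeff_transfer_eq_b {n N : ℕ} (hnN : n ≤ N) :
    coeff n (vecMul ![1, 0] ((List.range N).map fun i => Mgf (i + 1)).prod ⬝ᵥ ![1, 1])
      = (b n : ℤ) := by
  rw [coeff_transfer_eq_sum_fib_mul, sum_powerset_fib_mul_coeff_prod_Sgf hnN, b_eq_sum_fib,
    Nat.cast_sum]

theorem b_zero : b 0 = 1 := by
  simp [b_eq_sum_fib]

theorem coeff_transfer_matrix_product_eq_b_general (n N : ℕ) (hN : n ≤ N) :
    (PowerSeries.coeff n)
        (Matrix.vecMul ![1, 0] (((List.range N).map (fun i => Mgf (i + 1))).prod) ⬝ᵥ ![1, 1])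
      = (b n : ℤ) ∧
    (PowerSeries.coeff 0)
        (Matrix.vecMul ![1, 0] (((List.range N).map (fun i => Mgf (i + 1))).prod) ⬝ᵥ ![1, 1])
      = (b 0 : ℤ) ∧
    b 0 = 1 :=
  ⟨coeff_transfer_eq_b hN, coeff_transfer_eq_b (Nat.zero_le N), b_zero⟩

/-- For `1 ≤ n ≤ N`, the coefficient of `X^n` in `(1,0) ⬝ (M_1 M_2 ⋯ M_N) ⬝ (1,1)ᵀ`
equals `b n`, the number of block-separated overpartitions of `n`; moreover the
coefficient of `X^0` equals `b 0 = 1`. -/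
theorem coeff_transfer_matrix_product_eq_b (n N : ℕ) (hn : 1 ≤ n) (hN : n ≤ N) :
    (PowerSeries.coeff n)
        (Matrix.vecMul ![1, 0] (((List.range N).map (fun i => Mgf (i + 1))).prod) ⬝ᵥ ![1, 1])
      = (b n : ℤ) ∧
    (PowerSeries.coeff 0)
        (Matrix.vecMul ![1, 0] (((List.range N).map (fun i => Mgf (i + 1))).prod) ⬝ᵥ ![1, 1])
      = (b 0 : ℤ) ∧
    b 0 = 1 :=
  coeff_transfer_matrix_product_eq_b_general n N hN
end

section
/- For every natural number n, b(n) = ∑_{r=0}^{n} F_{r+2} · d_r(n), where d_r(n) is the number of partitions of n having exactly r distinct part-sizes. -/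
/-- `d r n` is the number of partitions of `n` with exactly `r` distinct part-sizes. -/
def d (r n : ℕ) : ℕ :=
  ((Finset.univ : Finset (Nat.Partition n)).filter
    (fun p => p.parts.toFinset.card = r)).card

/-!
A subset `S` of a finite chain `T` in which no two elements of `S` are adjacent in `T` either
avoids the minimum `a` of `T`, and is then such a subset of `T \ {a}`, or contains `a`, and then
avoids the successor `b` of `a` in `T` and is `{a}` together with such a subset of
`T \ {a, b}`. Hence these subsets are counted by `F_{|T|+2}`, and summing `F_{r+2}` over the
partitions of `n`, grouped by their number `r` of distinct part-sizes, gives `b n`.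
-/

open Finset

namespace Finset

variable {α : Type*} [LinearOrder α] {a b : α} {S S' T U : Finset α}

def IsSeparatedBy (S T : Finset α) : Prop :=
  ∀ x ∈ S, ∀ y ∈ S, x < y → ∃ c ∈ T, x < c ∧ c < y

instance (T : Finset α) : DecidablePred (IsSeparatedBy · T) := fun _ =>
  decidableDforallFinset

def separatedSubsets (T : Finset α) : Finset (Finset α) :=
  T.powerset.filter (IsSeparatedBy · T)

@[simp]
theorem mem_separatedSubsets : S ∈ separatedSubsets T ↔ S ⊆ T ∧ S.IsSeparatedBy T := by
  simp [separatedSubsets]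

theorem IsSeparatedBy.subset (hS : S.IsSeparatedBy T) (h : S' ⊆ S) : S'.IsSeparatedBy T :=
  fun x hx y hy hxy => hS x (h hx) y (h hy) hxy

theorem IsSeparatedBy.mono (hS : S.IsSeparatedBy T) (h : T ⊆ U) : S.IsSeparatedBy U :=
  fun x hx y hy hxy => (hS x hx y hy hxy).imp fun _ ⟨hc, hxc⟩ => ⟨h hc, hxc⟩

theorem IsSeparatedBy.of_insert (hS : S.IsSeparatedBy (insert a T)) (ha : ∀ x ∈ S, a ≤ x) :
    S.IsSeparatedBy T := by
  intro x hx y hy hxy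
  obtain ⟨c, hc, hxc, hcy⟩ := hS x hx y hy hxy
  exact ⟨c, (mem_insert.1 hc).resolve_left (ha x hx |>.trans_lt hxc).ne', hxc, hcy⟩

theorem separatedSubsets_of_card_le_one (hT : #T ≤ 1) : separatedSubsets T = T.powerset :=
  filter_true_of_mem fun _ hS x hx y hy hxy =>
    absurd (card_le_one.1 hT x (mem_powerset.1 hS hx) y (mem_powerset.1 hS hy)) hxy.ne

theorem filter_not_mem_separatedSubsets_insert (ha : ∀ x ∈ T, a < x) :
    (separatedSubsets (insert a T)).filter (a ∉ ·) = separatedSubsets T := by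
  ext S
  simp only [mem_filter, mem_separatedSubsets]
  constructor
  · rintro ⟨⟨hSaT, hS⟩, haS⟩
    have hST : S ⊆ T := (subset_insert_iff_of_notMem haS).1 hSaT
    exact ⟨hST, hS.of_insert fun x hx => (ha x (hST hx)).le⟩
  · rintro ⟨hST, hS⟩
    exact ⟨⟨hST.trans (subset_insert a T), hS.mono (subset_insert a T)⟩,
      fun haS => (ha a (hST haS)).false⟩

theorem filter_mem_separatedSubsets_insert_insert (hab : a < b) (hb : ∀ x ∈ U, b < x) :
    (separatedSubsets (insert a (insert b U))).filter (a ∈ ·) =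
      (separatedSubsets U).image (insert a) := by
  ext S
  simp only [mem_filter, mem_separatedSubsets, mem_image]
  constructor
  · rintro ⟨⟨hSabU, hS⟩, haS⟩
    have hbS : b ∉ S := fun hbS => by
      obtain ⟨c, hc, hac, hcb⟩ := hS a haS b hbS hab
      rcases mem_insert.1 hc with rfl | hc
      · exact hac.false
      rcases mem_insert.1 hc with rfl | hc
      · exact hcb.false
      · exact (hb c hc).not_gt hcb
    have hSU : S.erase a ⊆ U := fun x hx => by
      obtain ⟨hxa, hxS⟩ := mem_erase.1 hx
      exact (mem_insert.1 ((mem_insert.1 (hSabU hxS)).resolve_left hxa)).resolve_left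
        fun hxb => hbS (hxb ▸ hxS)
    refine ⟨S.erase a, ⟨hSU, ?_⟩, insert_erase haS⟩
    exact ((hS.subset (erase_subset a S)).of_insert fun x hx => (hab.trans (hb x (hSU hx))).le)
      |>.of_insert fun x hx => (hb x (hSU hx)).le
  · rintro ⟨S, ⟨hSU, hS⟩, rfl⟩
    refine ⟨⟨insert_subset_insert a (hSU.trans (subset_insert b U)), ?_⟩, mem_insert_self a S⟩
    intro x hx y hy hxy
    rw [mem_insert] at hx hy
    rcases hx with rfl | hx <;> rcases hy with rfl | hy
    · exact absurd hxy (lt_irrefl _)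
    · exact ⟨b, mem_insert_of_mem (mem_insert_self b U), hab, hb y (hSU hy)⟩
    · exact absurd hxy (hab.trans (hb x (hSU hx))).not_gt
    · exact (hS x hx y hy hxy).imp fun c ⟨hc, hxc⟩ =>
        ⟨mem_insert_of_mem (mem_insert_of_mem hc), hxc⟩

theorem card_separatedSubsets_insert_insert (hab : a < b) (hb : ∀ x ∈ U, b < x) :
    #(separatedSubsets (insert a (insert b U))) =
      #(separatedSubsets (insert b U)) + #(separatedSubsets U) := by
  have ha : ∀ x ∈ insert b U, a < x := fun x hx =>
    (mem_insert.1 hx).elim (· ▸ hab) fun hx => hab.trans (hb x hx)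
  have haU : ∀ S ∈ separatedSubsets U, a ∉ S := fun S hS haS =>
    (ha a (mem_insert_of_mem ((mem_separatedSubsets.1 hS).1 haS))).false
  rw [← card_filter_add_card_filter_not (a ∈ ·),
    filter_mem_separatedSubsets_insert_insert hab hb, filter_not_mem_separatedSubsets_insert ha,
    card_image_of_injOn fun S hS S' hS' h => by
      rw [← erase_insert (haU S hS), h, erase_insert (haU S' hS')], add_comm]

theorem card_separatedSubsets (T : Finset α) : #(separatedSubsets T) = Nat.fib (#T + 2) := by
  suffices h : #(separatedSubsets T) = Nat.fib (#T + 2) ∧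
      ∀ a, (∀ x ∈ T, a < x) → #(separatedSubsets (insert a T)) = Nat.fib (#T + 3) from h.1
  induction T using induction_on_min with
  | empty =>
    refine ⟨by rw [separatedSubsets_of_card_le_one (by simp)]; rfl, fun a _ => ?_⟩
    rw [insert_empty, separatedSubsets_of_card_le_one (card_singleton a).le, card_powerset,
      card_singleton]
    rfl
  | insert b U hb ih =>
    have hbU : b ∉ U := fun h => (hb b h).false
    refine ⟨by rw [ih.2 b hb, card_insert_of_notMem hbU], fun a ha => ?_⟩
    rw [card_separatedSubsets_insert_insert (ha b (mem_insert_self b U)) hb, ih.2 b hb, ih.1,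
      card_insert_of_notMem hbU, add_comm]
    exact (Nat.fib_add_two (n := #U + 2)).symm

end Finset

theorem Nat.Partition.card_toFinset_parts_le {n : ℕ} (p : n.Partition) : #p.parts.toFinset ≤ n :=
  calc #p.parts.toFinset
    _ ≤ #(Icc 1 n) := card_le_card fun i hi => mem_Icc.2
      ⟨p.parts_pos (Multiset.mem_toFinset.1 hi), p.le_of_mem_parts (Multiset.mem_toFinset.1 hi)⟩
    _ = n := by simp

/-- `b n = ∑_{r=0}^{n} F_{r+2} · d_r(n)`, where `F` is the Fibonacci sequence with
`F 1 = F 2 = 1` and `d_r(n)` counts partitions of `n` with exactly `r` distinct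
part-sizes. -/
theorem b_eq_sum_fib_mul_d (n : ℕ) :
    b n = ∑ r ∈ Finset.range (n + 1), Nat.fib (r + 2) * d r n := by
  have hb : b n = ∑ p : n.Partition, Nat.fib (#p.parts.toFinset + 2) :=
    sum_congr rfl fun p _ => card_separatedSubsets p.parts.toFinset
  rw [hb, ← sum_fiberwise_of_maps_to (t := range (n + 1))
    (g := fun p : n.Partition => #p.parts.toFinset)
    fun p _ => mem_range_succ_iff.2 p.card_toFinset_parts_le]
  refine sum_congr rfl fun r _ => ?_
  rw [sum_congr rfl fun p hp => by rw [(mem_filter.1 hp).2], sum_const,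
    smul_eq_mul, mul_comm, d]
end
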